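/- arXiv:2007.09219 — 4 statements merged into one kernel-verified Lean document; each statement's English description precedes it below -/
import Mathlib

section
/- The eigenvalues of the Laplacian on the flat Klein bottle K_{a,b} (quotient of R^2 by the group generated by (x,y)↦(x,y+b) and (x,y)↦(x+a/2,b−y)) are exactly the numbers 4π²(m²/a² + n²/b²) for m,n nonnegative integers where m is even when n = 0. -/
open Real

/-- The flat Laplacian on `ℝ²` (functions of two real variables). -/
noncomputable def lap (u : ℝ → ℝ → ℝ) (x y : ℝ) : ℝ :=
  iteratedDeriv 2 (fun s => u s y) x + iteratedDeriv 2 (fun t => u x t) y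

/-- A real number `μ` is a Laplace eigenvalue of the flat Klein bottle `K_{a,b}`
(quotient of `ℝ²` by the group generated by `τ₁(x,y) = (x, y+b)` and
`τ(x,y) = (x + a/2, b - y)`) iff there is a nonzero smooth function on `ℝ²`,
invariant under `τ₁` and `τ`, with `-Δu = μ u`. -/
def IsKleinEigenvalue (a b μ : ℝ) : Prop :=
  ∃ u : ℝ → ℝ → ℝ,
    ContDiff ℝ (⊤ : ℕ∞) (fun p : ℝ × ℝ => u p.1 p.2) ∧
    u ≠ 0 ∧
    (∀ x y, u x (y + b) = u x y) ∧
    (∀ x y, u (x + a / 2) (b - y) = u x y) ∧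
    (∀ x y, lap u x y = -μ * u x y)


open MeasureTheory intervalIntegral

noncomputable def P1 (v : ℝ → ℝ → ℝ) (x y : ℝ) : ℝ := deriv (fun s => v s y) x
noncomputable def P2 (v : ℝ → ℝ → ℝ) (x y : ℝ) : ℝ := deriv (fun t => v x t) y

lemma lap_eq (u : ℝ → ℝ → ℝ) (x y : ℝ) :
    lap u x y = P1 (P1 u) x y + P2 (P2 u) x y := by
  have h2 : ∀ f : ℝ → ℝ, iteratedDeriv 2 f = deriv (deriv f) := by
    intro f
    rw [show (2:ℕ) = 1 + 1 from rfl, iteratedDeriv_succ, iteratedDeriv_one]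
  rw [lap, h2, h2]
  rfl

section slices

variable {u : ℝ → ℝ → ℝ}

lemma hasDerivAt_slice1 (h : ContDiff ℝ (⊤ : ℕ∞) (fun p : ℝ × ℝ => u p.1 p.2)) (x y : ℝ) :
    HasDerivAt (fun s => u s y) (fderiv ℝ (fun p : ℝ × ℝ => u p.1 p.2) (x, y) (1, 0)) x := by
  have hline : HasDerivAt (fun s : ℝ => ((s, y) : ℝ × ℝ)) (1, 0) x :=
    (hasDerivAt_id x).prodMk (hasDerivAt_const x y)
  exact ((h.differentiable (by simp) (x, y)).hasFDerivAt.comp_hasDerivAt x hline)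

lemma hasDerivAt_slice2 (h : ContDiff ℝ (⊤ : ℕ∞) (fun p : ℝ × ℝ => u p.1 p.2)) (x y : ℝ) :
    HasDerivAt (fun t => u x t) (fderiv ℝ (fun p : ℝ × ℝ => u p.1 p.2) (x, y) (0, 1)) y := by
  have hline : HasDerivAt (fun t : ℝ => ((x, t) : ℝ × ℝ)) (0, 1) y :=
    (hasDerivAt_const y x).prodMk (hasDerivAt_id y)
  exact ((h.differentiable (by simp) (x, y)).hasFDerivAt.comp_hasDerivAt y hline)

lemma P1_eq (h : ContDiff ℝ (⊤ : ℕ∞) (fun p : ℝ × ℝ => u p.1 p.2)) (x y : ℝ) :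
    P1 u x y = fderiv ℝ (fun p : ℝ × ℝ => u p.1 p.2) (x, y) (1, 0) :=
  (hasDerivAt_slice1 h x y).deriv

lemma P2_eq (h : ContDiff ℝ (⊤ : ℕ∞) (fun p : ℝ × ℝ => u p.1 p.2)) (x y : ℝ) :
    P2 u x y = fderiv ℝ (fun p : ℝ × ℝ => u p.1 p.2) (x, y) (0, 1) :=
  (hasDerivAt_slice2 h x y).deriv

lemma contDiff_P1 (h : ContDiff ℝ (⊤ : ℕ∞) (fun p : ℝ × ℝ => u p.1 p.2)) :
    ContDiff ℝ (⊤ : ℕ∞) (fun p : ℝ × ℝ => P1 u p.1 p.2) := by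
  have h1 : ContDiff ℝ (⊤ : ℕ∞) (fun p : ℝ × ℝ => fderiv ℝ (fun p : ℝ × ℝ => u p.1 p.2) p (1, 0)) :=
    (h.fderiv_right (mod_cast le_top)).clm_apply contDiff_const
  have : (fun p : ℝ × ℝ => P1 u p.1 p.2)
      = fun p : ℝ × ℝ => fderiv ℝ (fun p : ℝ × ℝ => u p.1 p.2) p (1, 0) := by
    funext p; exact P1_eq h p.1 p.2
  rw [this]; exact h1

lemma contDiff_P2 (h : ContDiff ℝ (⊤ : ℕ∞) (fun p : ℝ × ℝ => u p.1 p.2)) :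
    ContDiff ℝ (⊤ : ℕ∞) (fun p : ℝ × ℝ => P2 u p.1 p.2) := by
  have h1 : ContDiff ℝ (⊤ : ℕ∞) (fun p : ℝ × ℝ => fderiv ℝ (fun p : ℝ × ℝ => u p.1 p.2) p (0, 1)) :=
    (h.fderiv_right (mod_cast le_top)).clm_apply contDiff_const
  have : (fun p : ℝ × ℝ => P2 u p.1 p.2)
      = fun p : ℝ × ℝ => fderiv ℝ (fun p : ℝ × ℝ => u p.1 p.2) p (0, 1) := by
    funext p; exact P2_eq h p.1 p.2
  rw [this]; exact h1

end slices


noncomputable def EE (c : ℝ) (x : ℝ) : ℂ := Complex.exp ((c : ℂ) * x * Complex.I)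

lemma EE_hasDerivAt (c x : ℝ) : HasDerivAt (EE c) ((c : ℂ) * Complex.I * EE c x) x := by
  have h1 : HasDerivAt (fun x : ℝ => (c : ℂ) * x * Complex.I) ((c : ℂ) * Complex.I) x := by
    have : HasDerivAt (fun x : ℝ => (x : ℂ)) 1 x := (hasDerivAt_id x).ofReal_comp
    simpa using (this.const_mul (c : ℂ)).mul_const Complex.I
  have := h1.cexp
  rw [show (c : ℂ) * Complex.I * EE c x = Complex.exp ((c:ℂ) * x * Complex.I) * ((c:ℂ) * Complex.I) by rw [EE]; ring]
  exact this

lemma EE_continuous (c : ℝ) : Continuous (EE c) := by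
  have : Continuous (fun x : ℝ => (c : ℂ) * x * Complex.I) := by continuity
  exact Complex.continuous_exp.comp this

lemma EE_zero_apply (c : ℝ) : EE c 0 = 1 := by simp [EE]

lemma EE_add (c x y : ℝ) : EE c (x + y) = EE c x * EE c y := by
  simp [EE, ← Complex.exp_add]; ring_nf

-- period: if c * T = -2πm then EE c (x+T) = EE c x
lemma EE_periodic {c T : ℝ} (m : ℤ) (h : c * T = 2 * π * m) (x : ℝ) :
    EE c (x + T) = EE c x := by
  rw [EE_add]
  have : EE c T = 1 := by
    have : ((c : ℂ) * T * Complex.I) = (m : ℂ) * (2 * π * Complex.I) := by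
      push_cast
      rw [show ((c : ℂ) * T) = ((c * T : ℝ) : ℂ) by push_cast; ring, h]
      push_cast; ring
    rw [EE, this, Complex.exp_int_mul_two_pi_mul_I]
  rw [this, mul_one]

lemma EE_half {c T : ℝ} (m : ℤ) (h : c * T = π * m) (x : ℝ) :
    EE c (x + T) = (-1) ^ m * EE c x := by
  rw [EE_add, mul_comm]
  congr 1
  have h2 : ((c : ℂ) * T * Complex.I) = (m : ℂ) * (π * Complex.I) := by
    rw [show ((c : ℂ) * T) = ((c * T : ℝ) : ℂ) by push_cast; ring, h]
    push_cast; ring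
  rw [EE, h2, Complex.exp_int_mul, Complex.exp_pi_mul_I]

/-- Differentiation under the interval integral sign, continuous setting. -/
lemma hasDerivAt_param (a : ℝ) (w w' : ℝ → ℝ → ℂ)
    (hw : Continuous fun p : ℝ × ℝ => w p.1 p.2)
    (hw' : Continuous fun p : ℝ × ℝ => w' p.1 p.2)
    (hd : ∀ x y, HasDerivAt (fun y => w x y) (w' x y) y) (y₀ : ℝ) :
    HasDerivAt (fun y => ∫ x in (0:ℝ)..a, w x y) (∫ x in (0:ℝ)..a, w' x y₀) y₀ := by
  have hKc : IsCompact ((Set.uIcc (0:ℝ) a) ×ˢ (Set.Icc (y₀ - 1) (y₀ + 1))) :=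
    isCompact_uIcc.prod isCompact_Icc
  obtain ⟨C, hC⟩ := hKc.exists_bound_of_continuousOn hw'.continuousOn
  have key := intervalIntegral.hasDerivAt_integral_of_dominated_loc_of_deriv_le
    (F := fun y x => w x y) (F' := fun y x => w' x y) (x₀ := y₀)
    (bound := fun _ => C) (a := 0) (b := a) (μ := volume) (s := Metric.ball y₀ 1) (Metric.ball_mem_nhds y₀ one_pos)
    ?_ ?_ ?_ ?_ ?_ ?_
  · exact key.2
  · exact Filter.Eventually.of_forall fun y =>
      ((hw.comp (continuous_id.prodMk continuous_const)).aestronglyMeasurable :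
        AEStronglyMeasurable (fun x => w x y) _).restrict
  · exact ((hw.comp (continuous_id.prodMk continuous_const)) :
      Continuous fun x => w x y₀).intervalIntegrable _ _
  · exact ((hw'.comp (continuous_id.prodMk continuous_const)) :
      Continuous fun x => w' x y₀).aestronglyMeasurable.restrict
  · refine Filter.Eventually.of_forall fun x hx y hy => ?_
    refine hC (x, y) ⟨?_, ?_⟩
    · exact Set.uIoc_subset_uIcc hx
    · have := Metric.mem_ball.mp hy
      rw [Real.dist_eq] at this
      constructor <;> [linarith [neg_abs_le (y - y₀)]; linarith [le_abs_self (y - y₀)]]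
  · exact intervalIntegrable_const
  · exact Filter.Eventually.of_forall fun x hx y hy => hd x y

/-- Double integration by parts against `EE c` over a full period. -/
lemma parts2 {T cc : ℝ} (hE1 : EE cc T = 1) {v v1 v2 : ℝ → ℂ}
    (hv : ∀ x, HasDerivAt v (v1 x) x) (hv1 : ∀ x, HasDerivAt v1 (v2 x) x)
    (hcv : Continuous v) (hcv1 : Continuous v1) (hcv2 : Continuous v2)
    (hpv : v T = v 0) (hpv1 : v1 T = v1 0) :
    ∫ x in (0:ℝ)..T, EE cc x * v2 x = -((cc:ℂ)^2) * ∫ x in (0:ℝ)..T, EE cc x * v x := by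
  have hEd : ∀ x : ℝ, HasDerivAt (EE cc) ((cc:ℂ) * Complex.I * EE cc x) x :=
    fun x => EE_hasDerivAt cc x
  have hEc := EE_continuous cc
  have hE0 : EE cc 0 = 1 := EE_zero_apply cc
  have hint1 : IntervalIntegrable (fun x => (cc:ℂ) * Complex.I * EE cc x) volume 0 T :=
    (by continuity : Continuous fun x => (cc:ℂ) * Complex.I * EE cc x).intervalIntegrable _ _
  have step1 : ∫ x in (0:ℝ)..T, EE cc x * v2 x
      = -∫ x in (0:ℝ)..T, ((cc:ℂ) * Complex.I * EE cc x) * v1 x := by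
    have := intervalIntegral.integral_mul_deriv_eq_deriv_mul
      (u := EE cc) (u' := fun x => (cc:ℂ) * Complex.I * EE cc x) (v := v1) (v' := v2)
      (fun x _ => hEd x) (fun x _ => hv1 x) hint1 (hcv2.intervalIntegrable _ _)
    rw [this, hE1, hE0, hpv1]
    ring
  have step2 : ∫ x in (0:ℝ)..T, EE cc x * v1 x
      = -∫ x in (0:ℝ)..T, ((cc:ℂ) * Complex.I * EE cc x) * v x := by
    have := intervalIntegral.integral_mul_deriv_eq_deriv_mul
      (u := EE cc) (u' := fun x => (cc:ℂ) * Complex.I * EE cc x) (v := v) (v' := v1)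
      (fun x _ => hEd x) (fun x _ => hv x) hint1 (hcv1.intervalIntegrable _ _)
    rw [this, hE1, hE0, hpv]
    ring
  have pull : ∀ g : ℝ → ℂ, (∫ x in (0:ℝ)..T, ((cc:ℂ) * Complex.I * EE cc x) * g x)
      = (cc:ℂ) * Complex.I * ∫ x in (0:ℝ)..T, EE cc x * g x := by
    intro g
    rw [← intervalIntegral.integral_const_mul]
    congr 1; funext x; ring
  rw [step1, pull, step2, pull]
  have : Complex.I ^ 2 = -1 := Complex.I_sq
  ring_nf
  rw [Complex.I_sq]
  ring

/-- Fourier uniqueness: a continuous periodic function with a nonzero value has a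
nonzero Fourier coefficient. -/
lemma exists_fourierInt_ne_zero {T : ℝ} (hT : 0 < T) {f : ℝ → ℂ}
    (hf : Continuous f) (hper : ∀ x, f (x + T) = f x) {x₀ : ℝ} (hx₀ : f x₀ ≠ 0) :
    ∃ n : ℤ, (∫ x in (0:ℝ)..T, EE (-(2 * π * n / T)) x * f x) ≠ 0 := by
  by_contra hcon
  push_neg at hcon
  haveI : Fact (0 < T) := ⟨hT⟩
  set F := AddCircle.liftIco T 0 f with hF
  have hper' : Function.Periodic f T := hper
  have hFc : Continuous F := by
    apply AddCircle.liftIco_zero_continuous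
    · exact (hper 0).symm.trans (by rw [zero_add])
    · exact hf.continuousOn
  have hcoeff : ∀ n : ℤ, fourierCoeff F n = 0 := by
    intro n
    rw [hF, fourierCoeff_liftIco_eq, fourierCoeffOn_eq_integral]
    have : (∫ x in (0:ℝ)..0 + T, fourier (-n) (x : AddCircle (0 + T - 0)) • f x)
        = ∫ x in (0:ℝ)..T, EE (-(2 * π * n / T)) x * f x := by
      rw [zero_add]
      refine intervalIntegral.integral_congr fun x _ => ?_
      rw [smul_eq_mul]
      congr 1
      rw [fourier_coe_apply, EE]
      congr 1
      push_cast
      ring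
    rw [this, hcon n, smul_zero]
  -- pass to L², conclude F = 0
  set Fc : C(AddCircle T, ℂ) := ⟨F, hFc⟩ with hFcdef
  set FLp := ContinuousMap.toLp (E := ℂ) 2 AddCircle.haarAddCircle ℂ Fc with hFLp
  have hae : (FLp : AddCircle T → ℂ) =ᵐ[AddCircle.haarAddCircle] F :=
    ContinuousMap.coeFn_toLp _ _
  have hcoeff2 : ∀ n : ℤ, fourierCoeff (FLp : AddCircle T → ℂ) n = 0 := by
    intro n
    rw [show fourierCoeff (FLp : AddCircle T → ℂ) n = fourierCoeff F n from ?_, hcoeff]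
    unfold fourierCoeff
    refine integral_congr_ae (hae.mono fun t ht => ?_)
    simp only [ht]
  have hrepr : (fourierBasis (T := T)).repr FLp = 0 := by
    ext n
    rw [fourierBasis_repr]
    simpa using hcoeff2 n
  have hFLp0 : FLp = 0 := (fourierBasis (T := T)).repr.map_eq_zero_iff.mp hrepr
  have hFae0 : F =ᵐ[AddCircle.haarAddCircle] (0 : AddCircle T → ℂ) := by
    refine hae.symm.trans ?_
    rw [hFLp0]
    exact MeasureTheory.Lp.coeFn_zero _ _ _
  have hF0 : F = 0 :=
    (Continuous.ae_eq_iff_eq AddCircle.haarAddCircle hFc continuous_const).mp hFae0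
  -- contradiction at x₀
  set x₁ := toIcoMod hT 0 x₀ with hx₁
  have hmem : x₁ ∈ Set.Ico 0 T := by simpa using toIcoMod_mem_Ico hT 0 x₀
  have hval : f x₁ = f x₀ := by
    rw [hx₁, toIcoMod]
    exact hper'.sub_zsmul_eq _
  have : F ↑x₁ = f x₁ := AddCircle.liftIco_zero_coe_apply hmem
  rw [hF0] at this
  exact hx₀ (by rw [← hval, ← this]; rfl)

noncomputable def GG (a : ℝ) (u : ℝ → ℝ → ℝ) (m : ℤ) (y : ℝ) : ℂ :=
  ∫ x in (0:ℝ)..a, EE (-(2 * π * m / a)) x * (u x y : ℂ)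

noncomputable def HH (a b : ℝ) (u : ℝ → ℝ → ℝ) (m n : ℤ) : ℂ :=
  ∫ y in (0:ℝ)..b, EE (-(2 * π * n / b)) y * GG a u m y

section forward

variable {a b μ : ℝ} {u : ℝ → ℝ → ℝ}

-- x-periodicity from the Klein relations
lemma per_x (hk : ∀ x y, u (x + a / 2) (b - y) = u x y) (x y : ℝ) :
    u (x + a) y = u x y := by
  have h1 := hk (x + a / 2) (b - y)
  have h2 := hk x y
  rw [show x + a / 2 + a / 2 = x + a by ring, show b - (b - y) = y by ring] at h1
  rw [h1, h2]

lemma per_P1_x (hk : ∀ x y, u (x + a / 2) (b - y) = u x y) (x y : ℝ) :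
    P1 u (x + a) y = P1 u x y := by
  unfold P1
  rw [← deriv_comp_add_const]
  congr 1
  funext s
  exact per_x hk s y

lemma per_P2_y (hp1 : ∀ x y, u x (y + b) = u x y) (x y : ℝ) :
    P2 u x (y + b) = P2 u x y := by
  unfold P2
  rw [← deriv_comp_add_const]
  congr 1
  funext t
  exact hp1 x t

lemma hasDerivAt_P1' (h : ContDiff ℝ (⊤ : ℕ∞) (fun p : ℝ × ℝ => u p.1 p.2)) (x y : ℝ) :
    HasDerivAt (fun s => u s y) (P1 u x y) x := by
  rw [P1_eq h]; exact hasDerivAt_slice1 h x y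

lemma hasDerivAt_P2' (h : ContDiff ℝ (⊤ : ℕ∞) (fun p : ℝ × ℝ => u p.1 p.2)) (x y : ℝ) :
    HasDerivAt (fun t => u x t) (P2 u x y) y := by
  rw [P2_eq h]; exact hasDerivAt_slice2 h x y

/-- Differentiation of `y ↦ ∫₀ᵃ EE c x * v x y` under the integral. -/
lemma intEE_hasDerivAt {v : ℝ → ℝ → ℝ} (hv : ContDiff ℝ (⊤ : ℕ∞) (fun p : ℝ × ℝ => v p.1 p.2))
    (c : ℝ) (y : ℝ) :
    HasDerivAt (fun y => ∫ x in (0:ℝ)..a, EE c x * (v x y : ℂ))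
      (∫ x in (0:ℝ)..a, EE c x * (P2 v x y : ℂ)) y := by
  apply hasDerivAt_param a (fun x y => EE c x * (v x y : ℂ))
    (fun x y => EE c x * (P2 v x y : ℂ))
  · exact ((EE_continuous c).comp continuous_fst).mul
      (Complex.continuous_ofReal.comp hv.continuous)
  · exact ((EE_continuous c).comp continuous_fst).mul
      (Complex.continuous_ofReal.comp (contDiff_P2 hv).continuous)
  · intro x y
    exact ((hasDerivAt_P2' hv x y).ofReal_comp).const_mul (EE c x)

lemma GG_hasDerivAt (h : ContDiff ℝ (⊤ : ℕ∞) (fun p : ℝ × ℝ => u p.1 p.2)) (m : ℤ) (y : ℝ) :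
    HasDerivAt (GG a u m)
      (∫ x in (0:ℝ)..a, EE (-(2 * π * m / a)) x * (P2 u x y : ℂ)) y :=
  intEE_hasDerivAt h _ y

lemma cont_slice_x {v : ℝ → ℝ → ℝ} (hv : Continuous (fun p : ℝ × ℝ => v p.1 p.2)) (y : ℝ) :
    Continuous (fun x => (v x y : ℂ)) :=
  Complex.continuous_ofReal.comp (hv.comp (continuous_id.prodMk continuous_const))

lemma cont_slice_y {v : ℝ → ℝ → ℝ} (hv : Continuous (fun p : ℝ × ℝ => v p.1 p.2)) (x : ℝ) :
    Continuous (fun y => (v x y : ℂ)) :=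
  Complex.continuous_ofReal.comp (hv.comp (continuous_const.prodMk continuous_id))

lemma EEa_one (ha : 0 < a) (m : ℤ) : EE (-(2 * π * m / a)) a = 1 := by
  have h := EE_periodic (c := -(2 * π * m / a)) (T := a) (-m)
    (by push_cast; field_simp) 0
  rw [zero_add, EE_zero_apply] at h
  exact h

lemma GG1_eq (ha : 0 < a)
    (h : ContDiff ℝ (⊤ : ℕ∞) (fun p : ℝ × ℝ => u p.1 p.2))
    (hk : ∀ x y, u (x + a / 2) (b - y) = u x y)
    (heig : ∀ x y, lap u x y = -μ * u x y) (m : ℤ) (y : ℝ) :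
    (∫ x in (0:ℝ)..a, EE (-(2 * π * m / a)) x * (P2 (P2 u) x y : ℂ))
      = (((-(2 * π * m / a) : ℝ) : ℂ) ^ 2 - (μ : ℂ)) * GG a u m y := by
  set c : ℝ := -(2 * π * m / a) with hc
  have hE1 : EE c a = 1 := EEa_one ha m
  have hlap : ∀ x y, P1 (P1 u) x y + P2 (P2 u) x y = -μ * u x y := fun x y => by
    rw [← lap_eq]; exact heig x y
  have hparts : (∫ x in (0:ℝ)..a, EE c x * (P1 (P1 u) x y : ℂ))
      = -((c:ℂ)^2) * ∫ x in (0:ℝ)..a, EE c x * (u x y : ℂ) := by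
    refine parts2 hE1 (v := fun x => (u x y : ℂ)) (v1 := fun x => (P1 u x y : ℂ))
      (v2 := fun x => (P1 (P1 u) x y : ℂ)) ?_ ?_ ?_ ?_ ?_ ?_ ?_
    · exact fun x => (hasDerivAt_P1' h x y).ofReal_comp
    · exact fun x => (hasDerivAt_P1' (contDiff_P1 h) x y).ofReal_comp
    · exact cont_slice_x h.continuous y
    · exact cont_slice_x (contDiff_P1 h).continuous y
    · exact cont_slice_x (contDiff_P1 (contDiff_P1 h)).continuous y
    · exact_mod_cast (show u a y = u 0 y by simpa using per_x hk 0 y)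
    · exact_mod_cast (show P1 u a y = P1 u 0 y by simpa using per_P1_x hk 0 y)
  have hsplit : (∫ x in (0:ℝ)..a, EE c x * (P2 (P2 u) x y : ℂ))
      = (∫ x in (0:ℝ)..a, ((-μ : ℂ) * (EE c x * (u x y : ℂ))
          - EE c x * (P1 (P1 u) x y : ℂ))) := by
    refine intervalIntegral.integral_congr fun x _ => ?_
    have := hlap x y
    have h2 : P2 (P2 u) x y = -μ * u x y - P1 (P1 u) x y := by linarith
    rw [h2]
    push_cast
    ring
  rw [hsplit, intervalIntegral.integral_sub, intervalIntegral.integral_const_mul]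
  · rw [hparts, GG, ← hc]
    ring
  · exact (continuous_const.mul ((EE_continuous c).mul
      (cont_slice_x h.continuous y))).intervalIntegrable _ _
  · exact ((EE_continuous c).mul
      (cont_slice_x (contDiff_P1 (contDiff_P1 h)).continuous y)).intervalIntegrable _ _

lemma key_relation (ha : 0 < a) (hb : 0 < b)
    (h : ContDiff ℝ (⊤ : ℕ∞) (fun p : ℝ × ℝ => u p.1 p.2))
    (hp1 : ∀ x y, u x (y + b) = u x y)
    (hk : ∀ x y, u (x + a / 2) (b - y) = u x y)
    (heig : ∀ x y, lap u x y = -μ * u x y) (m n : ℤ) :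
    ((((-(2 * π * m / a) : ℝ)) : ℂ) ^ 2 + (((-(2 * π * n / b) : ℝ)) : ℂ) ^ 2 - (μ : ℂ))
      * HH a b u m n = 0 := by
  set c : ℝ := -(2 * π * m / a) with hc
  set d : ℝ := -(2 * π * n / b) with hd
  set G1 : ℝ → ℂ := fun y => ∫ x in (0:ℝ)..a, EE c x * (P2 u x y : ℂ) with hG1
  have hv : ∀ y, HasDerivAt (GG a u m) (G1 y) y := fun y => GG_hasDerivAt h m y
  have hv1 : ∀ y, HasDerivAt G1 ((((c:ℝ):ℂ)^2 - (μ:ℂ)) * GG a u m y) y := by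
    intro y
    have h1 := intEE_hasDerivAt (a := a) (contDiff_P2 h) c y
    rwa [GG1_eq ha h hk heig m y] at h1
  have hcG : Continuous (GG a u m) :=
    continuous_iff_continuousAt.mpr fun y => (hv y).continuousAt
  have hcG1 : Continuous G1 :=
    continuous_iff_continuousAt.mpr fun y => (hv1 y).continuousAt
  have hpv : GG a u m b = GG a u m 0 := by
    unfold GG
    refine intervalIntegral.integral_congr fun x _ => ?_
    have := hp1 x 0
    rw [zero_add] at this
    rw [this]
  have hpv1 : G1 b = G1 0 := by
    rw [hG1]
    refine intervalIntegral.integral_congr fun x _ => ?_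
    have := per_P2_y hp1 x 0
    rw [zero_add] at this
    rw [this]
  have hparts := parts2 (T := b) (cc := d) (EEa_one hb n)
    (v := GG a u m) (v1 := G1) (v2 := fun y => (((c:ℝ):ℂ)^2 - (μ:ℂ)) * GG a u m y)
    hv hv1 hcG hcG1 (continuous_const.mul hcG) hpv hpv1
  have hpull : (∫ y in (0:ℝ)..b, EE d y * ((((c:ℝ):ℂ)^2 - (μ:ℂ)) * GG a u m y))
      = (((c:ℝ):ℂ)^2 - (μ:ℂ)) * HH a b u m n := by
    rw [HH, ← hd, ← intervalIntegral.integral_const_mul]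
    refine intervalIntegral.integral_congr fun y _ => ?_
    ring
  rw [hpull] at hparts
  have hH : (∫ y in (0:ℝ)..b, EE d y * GG a u m y) = HH a b u m n := by
    rw [HH, ← hd]
  rw [hH] at hparts
  have : (((c:ℝ):ℂ)^2 - (μ:ℂ)) * HH a b u m n + ((d:ℝ):ℂ)^2 * HH a b u m n = 0 := by
    rw [hparts]; ring
  calc ((((c:ℝ)):ℂ)^2 + (((d:ℝ)):ℂ)^2 - (μ:ℂ)) * HH a b u m n
      = (((c:ℝ):ℂ)^2 - (μ:ℂ)) * HH a b u m n + ((d:ℝ):ℂ)^2 * HH a b u m n := by ring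
    _ = 0 := this

lemma GG_symm (ha : 0 < a)
    (hcu : Continuous (fun p : ℝ × ℝ => u p.1 p.2))
    (hk : ∀ x y, u (x + a / 2) (b - y) = u x y) (m : ℤ) (y : ℝ) :
    GG a u m (b - y) = (-1) ^ m * GG a u m y := by
  set c : ℝ := -(2 * π * m / a) with hc
  have hhalf : ∀ t : ℝ, EE c (t + a / 2) = (-1) ^ m * EE c t := by
    intro t
    have h := EE_half (c := c) (T := a / 2) (-m)
      (by rw [hc]; push_cast; field_simp) t
    rw [h]
    congr 1
    rw [zpow_neg, ← inv_zpow, inv_neg, inv_one]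
  have hsub : ∀ x : ℝ, (u x (b - y) : ℂ) = (u (x - a / 2) y : ℂ) := by
    intro x
    have := hk (x - a / 2) y
    rw [show x - a / 2 + a / 2 = x by ring] at this
    rw [this]
  have step1 : GG a u m (b - y)
      = ∫ x in (0:ℝ)..a, (fun t => EE c (t + a / 2) * (u t y : ℂ)) (x - a / 2) := by
    unfold GG
    rw [← hc]
    refine intervalIntegral.integral_congr fun x _ => ?_
    dsimp only
    rw [show x - a / 2 + a / 2 = x by ring, hsub x]
  rw [step1, intervalIntegral.integral_comp_sub_right (fun t => EE c (t + a / 2) * (u t y : ℂ))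
    (a / 2)]
  have step2 : (∫ x in (0 - a/2 : ℝ)..(a - a/2), EE c (x + a / 2) * (u x y : ℂ))
      = (-1) ^ m * ∫ x in (0 - a/2 : ℝ)..(a - a/2), EE c x * (u x y : ℂ) := by
    rw [← intervalIntegral.integral_const_mul]
    refine intervalIntegral.integral_congr fun x _ => ?_
    rw [hhalf x]; ring
  rw [step2]
  congr 1
  -- periodic shift
  have hper : Function.Periodic (fun x => EE c x * (u x y : ℂ)) a := by
    intro x
    dsimp only
    rw [EE_periodic (c := c) (T := a) (-m) (by rw [hc]; push_cast; field_simp) x]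
    norm_cast
    rw [per_x hk x y]
  have := hper.intervalIntegral_add_eq (-(a/2)) 0
  rw [zero_add] at this
  rw [show (0 - a/2 : ℝ) = -(a/2) by ring, show (a - a/2 : ℝ) = -(a/2) + a by ring, this]
  rfl

lemma HH_zero_of_odd (ha : 0 < a) (hb : 0 < b)
    (hcu : Continuous (fun p : ℝ × ℝ => u p.1 p.2))
    (h : ContDiff ℝ (⊤ : ℕ∞) (fun p : ℝ × ℝ => u p.1 p.2))
    (hk : ∀ x y, u (x + a / 2) (b - y) = u x y) {m : ℤ} (hm : Odd m) :
    HH a b u m 0 = 0 := by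
  have hE0 : ∀ y : ℝ, EE (-(2 * π * (0:ℤ) / b)) y = 1 := by
    intro y
    rw [show (-(2 * π * ((0:ℤ):ℝ) / b)) = 0 by push_cast; ring]
    simp [EE]
  have hH : HH a b u m 0 = ∫ y in (0:ℝ)..b, GG a u m y := by
    unfold HH
    refine intervalIntegral.integral_congr fun y _ => ?_
    rw [hE0 y, one_mul]
  have hrefl : (∫ y in (0:ℝ)..b, GG a u m y) = ∫ y in (0:ℝ)..b, GG a u m (b - y) := by
    rw [intervalIntegral.integral_comp_sub_left (GG a u m) b]
    norm_num
  have hsign : (∫ y in (0:ℝ)..b, GG a u m (b - y))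
      = (-1)^m * ∫ y in (0:ℝ)..b, GG a u m y := by
    rw [← intervalIntegral.integral_const_mul]
    exact intervalIntegral.integral_congr fun y _ => GG_symm ha hcu hk m y
  have hm1 : ((-1 : ℂ))^m = -1 := Odd.neg_one_zpow hm
  have final : (∫ y in (0:ℝ)..b, GG a u m y) = -(∫ y in (0:ℝ)..b, GG a u m y) := by
    calc (∫ y in (0:ℝ)..b, GG a u m y) = ∫ y in (0:ℝ)..b, GG a u m (b - y) := hrefl
      _ = (-1)^m * ∫ y in (0:ℝ)..b, GG a u m y := hsign
      _ = -(∫ y in (0:ℝ)..b, GG a u m y) := by rw [hm1]; ring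
  have h2 : (2:ℂ) * (∫ y in (0:ℝ)..b, GG a u m y) = 0 := by linear_combination final
  rw [hH]
  exact (mul_eq_zero.mp h2).resolve_left two_ne_zero

lemma forward_dir (ha : 0 < a) (hb : 0 < b)
    (h : ContDiff ℝ (⊤ : ℕ∞) (fun p : ℝ × ℝ => u p.1 p.2))
    (hne : u ≠ 0)
    (hp1 : ∀ x y, u x (y + b) = u x y)
    (hk : ∀ x y, u (x + a / 2) (b - y) = u x y)
    (heig : ∀ x y, lap u x y = -μ * u x y) :
    ∃ M N : ℕ, (N = 0 → Even M) ∧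
      μ = 4 * π ^ 2 * ((M : ℝ) ^ 2 / a ^ 2 + (N : ℝ) ^ 2 / b ^ 2) := by
  -- find a nonzero value
  have hex : ∃ x y, u x y ≠ 0 := by
    by_contra hc
    push_neg at hc
    exact hne (funext fun x => funext fun y => hc x y)
  obtain ⟨x₀, y₀, hxy⟩ := hex
  -- find m with GG m y₀ ≠ 0
  obtain ⟨m, hm⟩ := exists_fourierInt_ne_zero ha (f := fun x => (u x y₀ : ℂ))
    (cont_slice_x h.continuous y₀)
    (fun x => by exact_mod_cast per_x hk x y₀)
    (Complex.ofReal_ne_zero.mpr hxy)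
  have hG : GG a u m y₀ ≠ 0 := by simpa [GG] using hm
  -- find n with HH m n ≠ 0
  have hGc : Continuous (GG a u m) :=
    continuous_iff_continuousAt.mpr fun y => (GG_hasDerivAt h m y).continuousAt
  have hGper : ∀ y, GG a u m (y + b) = GG a u m y := by
    intro y
    unfold GG
    exact intervalIntegral.integral_congr fun x _ => by rw [hp1 x y]
  obtain ⟨n, hn⟩ := exists_fourierInt_ne_zero hb (f := GG a u m) hGc hGper hG
  have hHne : HH a b u m n ≠ 0 := by simpa [HH] using hn
  -- the eigenvalue relation
  have hfac := key_relation ha hb h hp1 hk heig m n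
  have hzero : ((((-(2 * π * m / a) : ℝ)) : ℂ) ^ 2 + (((-(2 * π * n / b) : ℝ)) : ℂ) ^ 2
      - (μ : ℂ)) = 0 := (mul_eq_zero.mp hfac).resolve_right hHne
  have hreal : μ = (2 * π * m / a) ^ 2 + (2 * π * n / b) ^ 2 := by
    have : (((((2 * π * m / a : ℝ)) ^ 2 + ((2 * π * n / b : ℝ)) ^ 2 - μ : ℝ)) : ℂ) = 0 := by
      push_cast
      push_cast at hzero
      linear_combination hzero
    have := Complex.ofReal_eq_zero.mp this
    linarith
  refine ⟨m.natAbs, n.natAbs, ?_, ?_⟩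
  · intro hN0
    have hn0 : n = 0 := Int.natAbs_eq_zero.mp hN0
    by_contra hModd
    have hmodd : Odd m := Int.not_even_iff_odd.mp (fun hev => hModd (Int.natAbs_even.mpr hev))
    rw [hn0] at hHne
    exact hHne (HH_zero_of_odd ha hb h.continuous h hk hmodd)
  · have hm2 : ((m.natAbs : ℝ)) ^ 2 = ((m : ℝ)) ^ 2 := by
      rw [Nat.cast_natAbs]; push_cast; exact sq_abs _
    have hn2 : ((n.natAbs : ℝ)) ^ 2 = ((n : ℝ)) ^ 2 := by
      rw [Nat.cast_natAbs]; push_cast; exact sq_abs _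
    rw [hreal, hm2, hn2]
    field_simp
    ring

end forward

lemma iter2_eq {g g1 g2 : ℝ → ℝ} (h1 : ∀ t, HasDerivAt g (g1 t) t)
    (h2 : ∀ t, HasDerivAt g1 (g2 t) t) (x : ℝ) : iteratedDeriv 2 g x = g2 x := by
  rw [show (2:ℕ) = 1 + 1 from rfl, iteratedDeriv_succ, iteratedDeriv_one]
  have hg : deriv g = g1 := funext fun t => (h1 t).deriv
  rw [hg]
  exact (h2 x).deriv

lemma hasDerivAt_cos_mul (α t : ℝ) :
    HasDerivAt (fun s => Real.cos (α * s)) (-(α * Real.sin (α * t))) t := by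
  have hin : HasDerivAt (fun s : ℝ => α * s) α t := by
    simpa using (hasDerivAt_id t).const_mul α
  exact ((Real.hasDerivAt_cos (α * t)).comp t hin).congr_deriv (by ring)

lemma hasDerivAt_sin_mul (α t : ℝ) :
    HasDerivAt (fun s => Real.sin (α * s)) (α * Real.cos (α * t)) t := by
  have hin : HasDerivAt (fun s : ℝ => α * s) α t := by
    simpa using (hasDerivAt_id t).const_mul α
  exact ((Real.hasDerivAt_sin (α * t)).comp t hin).congr_deriv (by ring)

lemma iter2_cos_mul (α C x : ℝ) :
    iteratedDeriv 2 (fun s => Real.cos (α * s) * C) x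
      = -(α ^ 2) * (Real.cos (α * x) * C) := by
  have h1 : ∀ t, HasDerivAt (fun s => Real.cos (α * s) * C)
      (-(α * Real.sin (α * t)) * C) t := fun t => (hasDerivAt_cos_mul α t).mul_const C
  have h2 : ∀ t, HasDerivAt (fun t => -(α * Real.sin (α * t)) * C)
      (-(α ^ 2) * (Real.cos (α * t) * C)) t := by
    intro t
    have := ((hasDerivAt_sin_mul α t).const_mul (-α)).mul_const C
    have e : (fun t => -(α * Real.sin (α * t)) * C) = fun y => -α * Real.sin (α * y) * C := by
      funext s; ring
    rw [e]; exact this.congr_deriv (by ring)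
  have h1' : ∀ t, HasDerivAt (fun s => Real.cos (α * s) * C)
      ((fun t => -(α * Real.sin (α * t)) * C) t) t := h1
  exact iter2_eq h1' h2 x

lemma iter2_sin_mul (α C x : ℝ) :
    iteratedDeriv 2 (fun s => Real.sin (α * s) * C) x
      = -(α ^ 2) * (Real.sin (α * x) * C) := by
  have h1 : ∀ t, HasDerivAt (fun s => Real.sin (α * s) * C)
      ((fun t => (α * Real.cos (α * t)) * C) t) t :=
    fun t => (hasDerivAt_sin_mul α t).mul_const C
  have h2 : ∀ t, HasDerivAt (fun t => (α * Real.cos (α * t)) * C)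
      (-(α ^ 2) * (Real.sin (α * t) * C)) t := by
    intro t
    have := ((hasDerivAt_cos_mul α t).const_mul α).mul_const C
    exact this.congr_deriv (by ring)
  exact iter2_eq h1 h2 x

lemma backward_dir {a b : ℝ} (ha : 0 < a) (hb : 0 < b) (M N : ℕ) (hpar : N = 0 → Even M) :
    IsKleinEigenvalue a b (4 * π ^ 2 * ((M : ℝ) ^ 2 / a ^ 2 + (N : ℝ) ^ 2 / b ^ 2)) := by
  set α : ℝ := 2 * π * M / a with hα
  set β : ℝ := 2 * π * N / b with hβ
  have hμ : 4 * π ^ 2 * ((M : ℝ) ^ 2 / a ^ 2 + (N : ℝ) ^ 2 / b ^ 2) = α ^ 2 + β ^ 2 := by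
    rw [hα, hβ]; field_simp; ring
  have hβb : β * b = N * (2 * π) := by rw [hβ]; field_simp; try ring
  have hβneg : ∀ y : ℝ, β * (b - y) = -(β * y) + (N : ℤ) * (2 * π) := by
    intro y; push_cast; rw [mul_sub, hβb]; try ring
  have hβper : ∀ y : ℝ, β * (y + b) = β * y + (N : ℤ) * (2 * π) := by
    intro y; push_cast; rw [mul_add, hβb]; try ring
  rcases Nat.even_or_odd M with hM | hM
  · -- even case : cos * cos
    obtain ⟨k, hk⟩ := hM
    have hαhalf : ∀ x : ℝ, α * (x + a / 2) = α * x + (k : ℤ) * (2 * π) := by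
      intro x
      rw [hα, mul_add]
      have : (2 * π * M / a) * (a / 2) = π * M := by field_simp
      rw [this, hk]
      push_cast; ring
    refine ⟨fun x y => Real.cos (α * x) * Real.cos (β * y), ?_, ?_, ?_, ?_, ?_⟩
    · exact (Real.contDiff_cos.comp (contDiff_const.mul contDiff_fst)).mul
        (Real.contDiff_cos.comp (contDiff_const.mul contDiff_snd))
    · intro hzero
      have h00 := congrFun (congrFun hzero 0) 0
      simp at h00
    · intro x y
      dsimp only
      rw [hβper y, Real.cos_add_int_mul_two_pi]
    · intro x y
      dsimp only
      rw [hαhalf x, Real.cos_add_int_mul_two_pi, hβneg y, Real.cos_add_int_mul_two_pi,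
        Real.cos_neg]
    · intro x y
      rw [lap]
      dsimp only
      have hs2 : (fun t => Real.cos (α * x) * Real.cos (β * t))
          = fun t => Real.cos (β * t) * Real.cos (α * x) := funext fun t => mul_comm _ _
      rw [hs2, iter2_cos_mul, iter2_cos_mul, hμ]
      ring
  · -- odd case : cos * sin
    obtain ⟨k, hk⟩ := hM
    have hN : N ≠ 0 := by
      intro hN0
      exact (Nat.not_odd_iff_even.mpr (hpar hN0)) ⟨k, hk⟩
    have hαhalf : ∀ x : ℝ, α * (x + a / 2) = (α * x + π) + (k : ℤ) * (2 * π) := by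
      intro x
      rw [hα, mul_add]
      have : (2 * π * M / a) * (a / 2) = π * M := by field_simp
      rw [this, hk]
      push_cast; ring
    refine ⟨fun x y => Real.cos (α * x) * Real.sin (β * y), ?_, ?_, ?_, ?_, ?_⟩
    · exact (Real.contDiff_cos.comp (contDiff_const.mul contDiff_fst)).mul
        (Real.contDiff_sin.comp (contDiff_const.mul contDiff_snd))
    · intro hzero
      have h00 := congrFun (congrFun hzero 0) (b / (4 * N))
      have harg : β * (b / (4 * N)) = π / 2 := by
        rw [hβ]
        have hN' : (N : ℝ) ≠ 0 := Nat.cast_ne_zero.mpr hN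
        field_simp
        ring
      rw [harg] at h00
      simp [Real.sin_pi_div_two] at h00
    · intro x y
      dsimp only
      rw [hβper y, Real.sin_add_int_mul_two_pi]
    · intro x y
      dsimp only
      rw [hαhalf x, Real.cos_add_int_mul_two_pi, Real.cos_add_pi, hβneg y,
        Real.sin_add_int_mul_two_pi, Real.sin_neg]
      ring
    · intro x y
      rw [lap]
      dsimp only
      have hs2 : (fun t => Real.cos (α * x) * Real.sin (β * t))
          = fun t => Real.sin (β * t) * Real.cos (α * x) := funext fun t => mul_comm _ _
      rw [hs2, iter2_cos_mul, iter2_sin_mul, hμ]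
      ring

/-- The eigenvalues of the Laplacian on the flat Klein bottle `K_{a,b}`
are exactly the numbers `4π²(m²/a² + n²/b²)` for nonnegative integers `m, n`
with `m` even when `n = 0`. -/
theorem klein_bottle_eigenvalues (a b : ℝ) (ha : 0 < a) (hb : 0 < b) (μ : ℝ) :
    IsKleinEigenvalue a b μ ↔
      ∃ m n : ℕ, (n = 0 → Even m) ∧
        μ = 4 * π ^ 2 * ((m : ℝ) ^ 2 / a ^ 2 + (n : ℝ) ^ 2 / b ^ 2) := by
  constructor
  · rintro ⟨u, h, hne, hp1, hk, heig⟩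
    exact forward_dir ha hb h hne hp1 hk heig
  · rintro ⟨m, n, hpar, rfl⟩
    exact backward_dir ha hb m n hpar
end

section
/- For every λ ≥ 0, the eigenvalue counting function of the flat Klein bottle K_1 satisfies W(λ) ≥ (π/2)λ − 2√λ − 3. -/
open Real

/-- Multiplicity of the pair `(m,n)` in the spectrum of the flat Klein bottle `K_1`:
`1` if `m = 0`; `2` if `m,n ≥ 1`; `2` if `m ≥ 2` even and `n = 0`; `0` otherwise. -/
def kleinMult (m n : ℕ) : ℕ :=
  if m = 0 then 1 else if n = 0 then (if Even m then 2 else 0) else 2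

/-- Eigenvalue counting function of `K_1` (fundamental data `a = b = 2π`, spectrum
`m² + n²`, `m` even when `n = 0`): number of eigenvalues `< λ` with multiplicity. -/
noncomputable def kleinW1 (lam : ℝ) : ℕ :=
  ∑ᶠ p : ℕ × ℕ, if (p.1 : ℝ) ^ 2 + (p.2 : ℝ) ^ 2 < lam then kleinMult p.1 p.2 else 0


lemma integral_sqrt_one_sub_sq_half : ∫ x in (0:ℝ)..1, Real.sqrt (1 - x ^ 2) = π / 4 := by
  have hc : Continuous fun x : ℝ => Real.sqrt (1 - x ^ 2) :=
    Real.continuous_sqrt.comp (by continuity)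
  have h1 := intervalIntegral.integral_comp_neg (a := (0:ℝ)) (b := 1)
      (fun x => Real.sqrt (1 - x ^ 2))
  simp only [neg_sq, neg_zero, neg_neg] at h1
  have h3 := intervalIntegral.integral_add_adjacent_intervals (μ := MeasureTheory.volume) (a := (-1:ℝ)) (b := 0) (c := 1)
      (hc.intervalIntegrable _ _) (hc.intervalIntegrable _ _)
  have h2 := integral_sqrt_one_sub_sq
  rw [← h1] at h3
  linarith

lemma integral_sqrt_sq_sub_sq (r : ℝ) (hr : 0 < r) :
    ∫ x in (0:ℝ)..r, Real.sqrt (r ^ 2 - x ^ 2) = π / 4 * r ^ 2 := by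
  have h1 : ∀ x : ℝ, Real.sqrt (r ^ 2 - x ^ 2) = r * Real.sqrt (1 - (x / r) ^ 2) := by
    intro x
    rw [show r ^ 2 - x ^ 2 = r ^ 2 * (1 - (x / r) ^ 2) by field_simp,
      Real.sqrt_mul (by positivity), Real.sqrt_sq hr.le]
  simp_rw [h1]
  rw [intervalIntegral.integral_const_mul,
    intervalIntegral.integral_comp_div (fun u => Real.sqrt (1 - u ^ 2)) hr.ne']
  simp only [zero_div, div_self hr.ne', smul_eq_mul]
  rw [integral_sqrt_one_sub_sq_half]
  ring

lemma sum_sqrt_ge_integral (lam : ℝ) (hlam : 0 ≤ lam) (M : ℕ) (hM : Real.sqrt lam ≤ M) :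
    π / 4 * lam ≤ ∑ m ∈ Finset.range M, Real.sqrt (lam - (m : ℝ) ^ 2) := by
  set r := Real.sqrt lam with hr
  have hr0 : 0 ≤ r := Real.sqrt_nonneg _
  have hl : r ^ 2 = lam := Real.sq_sqrt hlam
  have hg : Continuous fun x : ℝ => Real.sqrt (lam - x ^ 2) :=
    Real.continuous_sqrt.comp (by continuity)
  have hanti : AntitoneOn (fun x : ℝ => Real.sqrt (lam - x ^ 2)) (Set.Icc 0 (0 + (M : ℕ))) := by
    intro x hx y hy hxy
    exact Real.sqrt_le_sqrt (by nlinarith [hx.1, hy.1])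
  have hkey := hanti.integral_le_sum
  simp only [zero_add] at hkey
  have hzero : ∫ x in r..(M : ℝ), Real.sqrt (lam - x ^ 2) = 0 := by
    rw [intervalIntegral.integral_congr (g := fun _ => (0:ℝ)) ?_,
      intervalIntegral.integral_zero]
    intro x hx
    rw [Set.uIcc_of_le hM] at hx
    exact Real.sqrt_eq_zero'.mpr (by nlinarith [hx.1, hl, hr0])
  have hsplit := intervalIntegral.integral_add_adjacent_intervals
      (μ := MeasureTheory.volume) (a := (0:ℝ)) (b := r) (c := (M : ℝ))
      (f := fun x => Real.sqrt (lam - x ^ 2))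
      (hg.intervalIntegrable _ _) (hg.intervalIntegrable _ _)
  have hval : ∫ x in (0:ℝ)..r, Real.sqrt (lam - x ^ 2) = π / 4 * lam := by
    rcases eq_or_lt_of_le hr0 with h | h
    · have : lam = 0 := by nlinarith
      simp [← h, this]
    · rw [← hl]
      exact integral_sqrt_sq_sub_sq r h
  calc π / 4 * lam = ∫ x in (0:ℝ)..(M : ℝ), Real.sqrt (lam - x ^ 2) := by
        rw [← hsplit, hzero, hval, add_zero]
    _ ≤ _ := hkey

lemma sum_even_indicator (M : ℕ) :
    ∑ m ∈ Finset.range M, (if Even m then (0:ℕ) else 2) = 2 * (M / 2) := by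
  induction M with
  | zero => simp
  | succ M ih =>
    rw [Finset.sum_range_succ, ih]
    rcases Nat.even_or_odd M with h | h
    · rw [if_pos h]
      rw [Nat.even_iff] at h
      omega
    · rw [if_neg (Nat.not_even_iff_odd.mpr h)]
      rw [Nat.odd_iff] at h
      omega


lemma row_zero (lam : ℝ) (hlam : 0 ≤ lam) :
    ((⌈Real.sqrt lam⌉₊ : ℝ)) ≤ ∑ n ∈ Finset.range ⌈Real.sqrt lam⌉₊,
      (if ((0:ℕ) : ℝ) ^ 2 + (n : ℝ) ^ 2 < lam then (kleinMult 0 n : ℝ) else 0) := by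
  set r := Real.sqrt lam with hr
  have hcong : ∀ n ∈ Finset.range ⌈r⌉₊,
      (if ((0:ℕ) : ℝ) ^ 2 + (n : ℝ) ^ 2 < lam then (kleinMult 0 n : ℝ) else 0) = 1 := by
    intro n hn
    rw [Finset.mem_range] at hn
    have h2 : (n : ℝ) + 1 ≤ (⌈r⌉₊ : ℝ) := by exact_mod_cast Nat.succ_le_of_lt hn
    have h3 := Nat.ceil_lt_add_one (Real.sqrt_nonneg lam)
    rw [← hr] at h3
    have h1 : (n : ℝ) < r := by linarith
    have h4 : (n : ℝ) ^ 2 < lam := (Real.lt_sqrt (n.cast_nonneg)).mp h1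
    rw [if_pos (by push_cast; linarith)]
    simp [kleinMult]
  rw [Finset.sum_congr rfl hcong]
  simp

lemma row_pos (lam : ℝ) (hlam : 0 ≤ lam) (M m : ℕ) (hm : m ≠ 0) (hM : Real.sqrt lam ≤ M)
    (hM0 : 0 < M) :
    2 * Real.sqrt (lam - (m : ℝ) ^ 2) - (if Even m then (0:ℝ) else 2) ≤
      ∑ n ∈ Finset.range M, (if (m : ℝ) ^ 2 + (n : ℝ) ^ 2 < lam then (kleinMult m n : ℝ) else 0) := by
  set s := Real.sqrt (lam - (m : ℝ) ^ 2) with hs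
  have hs0 : 0 ≤ s := Real.sqrt_nonneg _
  set c : ℝ := if Even m then (0:ℝ) else 2 with hc
  have hc0 : 0 ≤ c := by rw [hc]; split_ifs <;> norm_num
  have hcond : ∀ n : ℕ, ((m : ℝ) ^ 2 + (n : ℝ) ^ 2 < lam ↔ (n : ℝ) < s) := by
    intro n
    rw [hs, Real.lt_sqrt (n.cast_nonneg)]
    constructor <;> intro <;> linarith
  have hterm : ∀ n ∈ Finset.range M,
      (if (n : ℝ) < s then (2:ℝ) else 0) - (if n = 0 then c else 0) ≤
        (if (m : ℝ) ^ 2 + (n : ℝ) ^ 2 < lam then (kleinMult m n : ℝ) else 0) := by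
    intro n _
    simp only [hcond n]
    rcases Nat.eq_zero_or_pos n with rfl | hn
    · simp only [kleinMult, if_neg hm, if_pos rfl, hc]
      split_ifs <;> push_cast <;> norm_num
    · rw [if_neg hn.ne', show kleinMult m n = 2 by simp [kleinMult, hm, hn.ne']]
      push_cast
      split_ifs <;> norm_num
  have hsum := Finset.sum_le_sum hterm
  rw [Finset.sum_sub_distrib] at hsum
  have hone : ∑ n ∈ Finset.range M, (if n = 0 then c else 0) = c := by
    rw [Finset.sum_ite_eq' (Finset.range M) 0 (fun _ => c)]
    simp [hM0]
  rw [hone] at hsum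
  have hsr : s ≤ Real.sqrt lam := Real.sqrt_le_sqrt (by nlinarith [sq_nonneg ((m : ℝ))])
  have hceil : ⌈s⌉₊ ≤ M := Nat.ceil_le.mpr (hsr.trans hM)
  have h2s : 2 * s ≤ ∑ n ∈ Finset.range M, (if (n : ℝ) < s then (2:ℝ) else 0) := by
    have hle := Nat.le_ceil s
    have hlt := Nat.ceil_lt_add_one hs0
    calc 2 * s ≤ 2 * (⌈s⌉₊ : ℝ) := by linarith
      _ = ∑ n ∈ Finset.range ⌈s⌉₊, (2:ℝ) := by
          rw [Finset.sum_const, Finset.card_range]; ring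
      _ = ∑ n ∈ Finset.range ⌈s⌉₊, (if (n : ℝ) < s then (2:ℝ) else 0) := by
          refine Finset.sum_congr rfl fun n hn => ?_
          rw [Finset.mem_range] at hn
          have h2 : (n : ℝ) + 1 ≤ (⌈s⌉₊ : ℝ) := by exact_mod_cast Nat.succ_le_of_lt hn
          rw [if_pos (by linarith)]
      _ ≤ _ := by
          refine Finset.sum_le_sum_of_subset_of_nonneg (Finset.range_subset_range.mpr hceil)
            fun n _ _ => ?_
          split_ifs <;> norm_num
  linarith

/-- for every `λ ≥ 0`, the counting function of `K_1` satisfies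
`W(λ) ≥ (π/2)λ − 2√λ − 3`. -/
theorem kleinW1_lower_bound (lam : ℝ) (hlam : 0 ≤ lam) :
    (kleinW1 lam : ℝ) ≥ π / 2 * lam - 2 * Real.sqrt lam - 3 := by
  set M := ⌈Real.sqrt lam⌉₊ with hMdef
  have hr0 : 0 ≤ Real.sqrt lam := Real.sqrt_nonneg _
  have hrM : Real.sqrt lam ≤ (M : ℝ) := Nat.le_ceil _
  have hMr : (M : ℝ) < Real.sqrt lam + 1 := Nat.ceil_lt_add_one hr0
  rcases Nat.eq_zero_or_pos M with hM0 | hMpos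
  · have hrz : Real.sqrt lam = 0 := le_antisymm (by rw [hM0] at hrM; exact_mod_cast hrM) hr0
    have hl0 : lam = 0 := by nlinarith [Real.sq_sqrt hlam]
    have hW : (0:ℝ) ≤ (kleinW1 lam : ℝ) := Nat.cast_nonneg _
    have hW0 : (0:ℝ) ≤ ((kleinW1 0 : ℕ) : ℝ) := Nat.cast_nonneg _
    rw [ge_iff_le, hl0]
    rw [Real.sqrt_zero]
    nlinarith [hW0]
  -- finsum to finset sum
  have hsupp : (Function.support fun p : ℕ × ℕ =>
      if (p.1 : ℝ) ^ 2 + (p.2 : ℝ) ^ 2 < lam then kleinMult p.1 p.2 else 0) ⊆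
      ↑(Finset.range M ×ˢ Finset.range M) := by
    intro p hp
    rw [Function.mem_support] at hp
    by_cases hc : (p.1 : ℝ) ^ 2 + (p.2 : ℝ) ^ 2 < lam
    · have h1 : (p.1 : ℝ) < Real.sqrt lam :=
        (Real.lt_sqrt (Nat.cast_nonneg _)).mpr (by nlinarith [sq_nonneg (p.2 : ℝ)])
      have h2 : (p.2 : ℝ) < Real.sqrt lam :=
        (Real.lt_sqrt (Nat.cast_nonneg _)).mpr (by nlinarith [sq_nonneg (p.1 : ℝ)])
      simp only [Finset.coe_product, Set.mem_prod, Finset.mem_coe, Finset.mem_range]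
      constructor
      · exact_mod_cast h1.trans_le hrM
      · exact_mod_cast h2.trans_le hrM
    · exact absurd (if_neg hc) hp
  have hWsum : ((kleinW1 lam : ℝ)) = ∑ m ∈ Finset.range M, ∑ n ∈ Finset.range M,
      (if (m : ℝ) ^ 2 + (n : ℝ) ^ 2 < lam then (kleinMult m n : ℝ) else 0) := by
    rw [kleinW1, finsum_eq_finset_sum_of_support_subset _ hsupp, Finset.sum_product]
    push_cast
    rfl
  rw [ge_iff_le, hWsum,
    Finset.sum_range_eq_add_Ico (fun m => ∑ n ∈ Finset.range M,
      (if (m : ℝ) ^ 2 + (n : ℝ) ^ 2 < lam then (kleinMult m n : ℝ) else 0)) hMpos]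
  have h0 := row_zero lam hlam
  rw [← hMdef] at h0
  have hrow : ∑ m ∈ Finset.Ico 1 M,
      (2 * Real.sqrt (lam - (m : ℝ) ^ 2) - (if Even m then (0:ℝ) else 2)) ≤
      ∑ m ∈ Finset.Ico 1 M, ∑ n ∈ Finset.range M,
        (if (m : ℝ) ^ 2 + (n : ℝ) ^ 2 < lam then (kleinMult m n : ℝ) else 0) := by
    refine Finset.sum_le_sum fun m hm => ?_
    rw [Finset.mem_Ico] at hm
    exact row_pos lam hlam M m (by omega) hrM hMpos
  have hIco := Finset.sum_range_eq_add_Ico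
    (fun m => 2 * Real.sqrt (lam - (m : ℝ) ^ 2) - (if Even m then (0:ℝ) else 2)) hMpos
  simp only [Nat.cast_zero, ne_eq, OfNat.ofNat_ne_zero, not_false_eq_true, zero_pow, sub_zero,
    Even.zero, if_pos, if_true] at hIco
  have hdist : ∑ m ∈ Finset.range M,
      (2 * Real.sqrt (lam - (m : ℝ) ^ 2) - (if Even m then (0:ℝ) else 2)) =
      2 * (∑ m ∈ Finset.range M, Real.sqrt (lam - (m : ℝ) ^ 2)) -
      ∑ m ∈ Finset.range M, (if Even m then (0:ℝ) else 2) := by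
    rw [Finset.sum_sub_distrib, Finset.mul_sum]
  have hint := sum_sqrt_ge_integral lam hlam M hrM
  have hcsum : ∑ m ∈ Finset.range M, (if Even m then (0:ℝ) else 2) ≤ (M : ℝ) := by
    have h1 := sum_even_indicator M
    have h2 : 2 * (M / 2) ≤ M := by omega
    calc ∑ m ∈ Finset.range M, (if Even m then (0:ℝ) else 2)
        = ((∑ m ∈ Finset.range M, (if Even m then (0:ℕ) else 2) : ℕ) : ℝ) := by
          push_cast; rfl
      _ ≤ (M : ℝ) := by rw [h1]; exact_mod_cast h2
  have s1 : π / 2 * lam - 2 * Real.sqrt lam - (M : ℝ) ≤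
      ∑ m ∈ Finset.Ico 1 M, (2 * Real.sqrt (lam - (m : ℝ) ^ 2) - (if Even m then (0:ℝ) else 2)) := by
    linarith
  have h2 := add_le_add h0 (le_trans s1 hrow)
  linarith [h2]
end

section
/- For every λ ≥ 0, the eigenvalue counting function of the flat Klein bottle K_2 satisfies W(λ) ≥ (π/4)λ − (3/2)√λ − 2. -/
open Real

/-- Eigenvalue counting function of `K_2` (fundamental data `a = 2π`, `b = π`,
spectrum `m² + 4n²`, `m` even when `n = 0`): number of eigenvalues `< λ`
with multiplicity. -/
noncomputable def kleinW2 (lam : ℝ) : ℕ :=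
  ∑ᶠ p : ℕ × ℕ, if (p.1 : ℝ) ^ 2 + 4 * (p.2 : ℝ) ^ 2 < lam then kleinMult p.1 p.2 else 0

lemma aux_I01 : ∫ t in (0:ℝ)..1, Real.sqrt (1 - t ^ 2) = π / 4 := by
  have hcont : Continuous fun t : ℝ => Real.sqrt (1 - t ^ 2) :=
    Real.continuous_sqrt.comp (continuous_const.sub (continuous_pow 2))
  have hadd : (∫ t in (-1:ℝ)..0, Real.sqrt (1 - t ^ 2)) +
      (∫ t in (0:ℝ)..1, Real.sqrt (1 - t ^ 2)) = ∫ t in (-1:ℝ)..1, Real.sqrt (1 - t ^ 2) :=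
    intervalIntegral.integral_add_adjacent_intervals (hcont.intervalIntegrable _ _)
      (hcont.intervalIntegrable _ _)
  have heven : (∫ t in (-1:ℝ)..0, Real.sqrt (1 - t ^ 2)) =
      ∫ t in (0:ℝ)..1, Real.sqrt (1 - t ^ 2) := by
    have h := intervalIntegral.integral_comp_neg (a := (0:ℝ)) (b := 1)
      (fun t : ℝ => Real.sqrt (1 - t ^ 2))
    simp only [neg_sq, neg_zero, neg_neg] at h
    rw [← h]
  rw [integral_sqrt_one_sub_sq] at hadd
  linarith

set_option maxHeartbeats 2000000 in
/-- for every `λ ≥ 0`, the counting function of `K_2` satisfies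
`W(λ) ≥ (π/4)λ − (3/2)√λ − 2`. -/
theorem kleinW2_lower_bound (lam : ℝ) (hlam : 0 ≤ lam) :
    (kleinW2 lam : ℝ) ≥ π / 4 * lam - 3 / 2 * Real.sqrt lam - 2 := by
  have hsq : Real.sqrt lam ^ 2 = lam := Real.sq_sqrt hlam
  have hs0 : (0:ℝ) ≤ Real.sqrt lam := Real.sqrt_nonneg lam
  by_cases hl4 : lam ≤ 4
  · have hs2 : Real.sqrt lam ≤ 2 := by nlinarith
    have hpi : π ≤ 4 := Real.pi_le_four
    have hW : (0:ℝ) ≤ (kleinW2 lam : ℝ) := Nat.cast_nonneg _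
    nlinarith
  push_neg at hl4
  set s := Real.sqrt lam with hsdef
  have hl0 : (0:ℝ) < lam := by linarith
  have hs2 : 2 < s := by nlinarith
  set N := ⌈s / 2⌉₊ with hNdef
  set S := ⌈s⌉₊ + 1 with hSdef
  have hN2 : 2 ≤ N := by
    have : (1:ℕ) < N := Nat.lt_ceil.mpr (by push_cast; linarith)
    omega
  have hNs : s / 2 ≤ (N : ℝ) := Nat.le_ceil _
  have hNn : ∀ n : ℕ, n < N → 4 * (n : ℝ) ^ 2 < lam := by
    intro n hn
    have h1 : (n : ℝ) < s / 2 := Nat.lt_ceil.mp hn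
    have h2 : (0:ℝ) ≤ (n : ℝ) := Nat.cast_nonneg n
    nlinarith
  have hltS : ∀ m : ℕ, (m : ℝ) < s → m < S := by
    intro m hm
    have h1 : (m : ℝ) < (⌈s⌉₊ : ℝ) := lt_of_lt_of_le hm (Nat.le_ceil s)
    have h2 := Nat.cast_lt.mp h1
    omega
  have hNS : N ≤ S := by
    have : N ≤ ⌈s⌉₊ := Nat.ceil_le_ceil (by linarith)
    omega
  set g : ℕ → ℕ → ℕ :=
    fun m n => if (m : ℝ) ^ 2 + 4 * (n : ℝ) ^ 2 < lam then kleinMult m n else 0 with hgdef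
  -- representation as a finite sum
  have hrep : kleinW2 lam = ∑ m ∈ Finset.range S, ∑ n ∈ Finset.range S, g m n := by
    rw [kleinW2, finsum_eq_sum_of_support_subset _
      (s := Finset.range S ×ˢ Finset.range S) ?_]
    · rw [Finset.sum_product]
    · intro p hp
      simp only [Function.mem_support, ne_eq, ite_eq_right_iff, not_forall] at hp
      obtain ⟨hcond, -⟩ := hp
      have h1 : ((p.1 : ℝ)) ^ 2 < lam := by nlinarith [sq_nonneg ((p.2 : ℝ))]
      have h2 : ((p.2 : ℝ)) ^ 2 < lam := by nlinarith [sq_nonneg ((p.1 : ℝ))]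
      have hp1 : p.1 < S := hltS _ ((Real.lt_sqrt (Nat.cast_nonneg _)).mpr h1)
      have hp2 : p.2 < S := hltS _ ((Real.lt_sqrt (Nat.cast_nonneg _)).mpr h2)
      simp [Finset.mem_product, hp1, hp2]
  have hS1 : 0 < S := by omega
  have hrangesum : ∀ (h : ℕ → ℕ),
      ∑ x ∈ Finset.range S, h x = h 0 + ∑ x ∈ Finset.Ico 1 S, h x := by
    intro h
    rw [Finset.range_eq_Ico, Finset.sum_eq_sum_Ico_succ_bot hS1]
  have hsplit : kleinW2 lam = (∑ n ∈ Finset.range S, g 0 n) +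
      ((∑ m ∈ Finset.Ico 1 S, g m 0) + ∑ m ∈ Finset.Ico 1 S, ∑ n ∈ Finset.Ico 1 S, g m n) := by
    rw [hrep, hrangesum]
    congr 1
    rw [← Finset.sum_add_distrib]
    exact Finset.sum_congr rfl fun m _ => hrangesum _
  -- bound on column m = 0
  have hA : N ≤ ∑ n ∈ Finset.range S, g 0 n := by
    calc N = ∑ _n ∈ Finset.range N, 1 := by simp
    _ = ∑ n ∈ Finset.range N, g 0 n := by
        refine Finset.sum_congr rfl fun n hn => ?_
        have hc := hNn n (Finset.mem_range.mp hn)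
        have hcond : ((0:ℕ):ℝ) ^ 2 + 4 * (n:ℝ) ^ 2 < lam := by push_cast; linarith
        simp only [hgdef]
        rw [if_pos hcond]
        simp [kleinMult]
    _ ≤ ∑ n ∈ Finset.range S, g 0 n :=
        Finset.sum_le_sum_of_subset (Finset.range_subset_range.mpr hNS)
  -- bound on row n = 0
  have hB : (N - 1) * 2 ≤ ∑ m ∈ Finset.Ico 1 S, g m 0 := by
    calc (N - 1) * 2 = ∑ _k ∈ Finset.Ico 1 N, 2 := by
          rw [Finset.sum_const, Nat.card_Ico, smul_eq_mul]
    _ = ∑ k ∈ Finset.Ico 1 N, g (2 * k) 0 := by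
        refine Finset.sum_congr rfl fun k hk => ?_
        obtain ⟨hk1, hk2⟩ := Finset.mem_Ico.mp hk
        have hc := hNn k hk2
        have hne : 2 * k ≠ 0 := by omega
        have hcond : ((2*k:ℕ):ℝ) ^ 2 + 4 * ((0:ℕ):ℝ) ^ 2 < lam := by push_cast; nlinarith
        simp only [hgdef]
        rw [if_pos hcond]
        simp [kleinMult, hne, even_two_mul]
    _ = ∑ m ∈ (Finset.Ico 1 N).image (fun k => 2 * k), g m 0 := by
        rw [Finset.sum_image (fun a _ b _ h => by omega)]
    _ ≤ ∑ m ∈ Finset.Ico 1 S, g m 0 := by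
        refine Finset.sum_le_sum_of_subset fun m hm => ?_
        obtain ⟨k, hk, rfl⟩ := Finset.mem_image.mp hm
        obtain ⟨hk1, hk2⟩ := Finset.mem_Ico.mp hk
        have hc := hNn k hk2
        have hlt : ((2 * k : ℕ) : ℝ) < s := by
          rw [Real.lt_sqrt (Nat.cast_nonneg _)]
          push_cast
          nlinarith
        exact Finset.mem_Ico.mpr ⟨by omega, hltS _ hlt⟩
  -- interior bound
  set M : ℕ → ℕ := fun n => ⌈Real.sqrt (lam - 4 * (n : ℝ) ^ 2)⌉₊ with hMdef
  have hM1 : ∀ n : ℕ, n < N → 1 ≤ M n := by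
    intro n hn
    have := hNn n hn
    exact Nat.ceil_pos.mpr (Real.sqrt_pos.mpr (by linarith))
  have hMS : ∀ n : ℕ, M n ≤ S := by
    intro n
    have h1 : Real.sqrt (lam - 4 * (n : ℝ) ^ 2) ≤ s :=
      Real.sqrt_le_sqrt (by nlinarith [sq_nonneg ((n:ℝ))])
    have h2 := Nat.ceil_le_ceil h1
    simp only [hMdef]
    omega
  have hC : ∑ n ∈ Finset.Ico 1 N, (M n - 1) * 2 ≤
      ∑ m ∈ Finset.Ico 1 S, ∑ n ∈ Finset.Ico 1 S, g m n := by
    rw [Finset.sum_comm]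
    have hsub : Finset.Ico 1 N ⊆ Finset.Ico 1 S := Finset.Ico_subset_Ico le_rfl hNS
    calc ∑ n ∈ Finset.Ico 1 N, (M n - 1) * 2
        ≤ ∑ n ∈ Finset.Ico 1 N, ∑ m ∈ Finset.Ico 1 S, g m n := by
          refine Finset.sum_le_sum fun n hn => ?_
          obtain ⟨hn1, hn2⟩ := Finset.mem_Ico.mp hn
          calc (M n - 1) * 2 = ∑ _m ∈ Finset.Ico 1 (M n), 2 := by
                rw [Finset.sum_const, Nat.card_Ico, smul_eq_mul]
          _ = ∑ m ∈ Finset.Ico 1 (M n), g m n := by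
              refine Finset.sum_congr rfl fun m hm => ?_
              obtain ⟨hm1, hm2⟩ := Finset.mem_Ico.mp hm
              have hmlt : (m : ℝ) < Real.sqrt (lam - 4 * (n : ℝ) ^ 2) := Nat.lt_ceil.mp hm2
              have hm2' : (m : ℝ) ^ 2 < lam - 4 * (n : ℝ) ^ 2 :=
                (Real.lt_sqrt (Nat.cast_nonneg _)).mp hmlt
              have hmne : m ≠ 0 := by omega
              have hnne : n ≠ 0 := by omega
              simp only [hgdef, kleinMult, hmne, hnne, if_false]
              rw [if_pos (by linarith)]
          _ ≤ ∑ m ∈ Finset.Ico 1 S, g m n :=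
              Finset.sum_le_sum_of_subset (Finset.Ico_subset_Ico le_rfl (hMS n))
    _ ≤ ∑ n ∈ Finset.Ico 1 S, ∑ m ∈ Finset.Ico 1 S, g m n :=
          Finset.sum_le_sum_of_subset_of_nonneg hsub fun _ _ _ => Nat.zero_le _
  -- combine the natural-number bounds
  have hWnat : N + ((N - 1) * 2 + ∑ n ∈ Finset.Ico 1 N, (M n - 1) * 2) ≤ kleinW2 lam := by
    rw [hsplit]
    exact Nat.add_le_add hA (Nat.add_le_add hB hC)
  -- pass to the reals
  have hcastW : (N : ℝ) + ((N : ℝ) - 1) * 2 +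
      ∑ n ∈ Finset.Ico 1 N, ((M n : ℝ) - 1) * 2 ≤ (kleinW2 lam : ℝ) := by
    have h0 := (Nat.cast_le (α := ℝ)).mpr hWnat
    push_cast at h0
    rw [Nat.cast_sub (show 1 ≤ N by omega)] at h0
    have hsum : (∑ n ∈ Finset.Ico 1 N, (((M n - 1 : ℕ) : ℝ) * 2)) =
        ∑ n ∈ Finset.Ico 1 N, ((M n : ℝ) - 1) * 2 := by
      refine Finset.sum_congr rfl fun n hn => ?_
      rw [Nat.cast_sub (hM1 n (Finset.mem_Ico.mp hn).2)]
      norm_num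
    rw [hsum] at h0
    push_cast at h0 ⊢
    linarith
  -- the integrand
  set F : ℝ → ℝ := fun x => Real.sqrt (lam - 4 * x ^ 2) with hFdef
  have hFc : Continuous F :=
    Real.continuous_sqrt.comp (continuous_const.sub (continuous_const.mul (continuous_pow 2)))
  have hFnn : ∀ x, 0 ≤ F x := fun x => Real.sqrt_nonneg _
  -- sqrt terms bound the M's from below
  have hsum1 : ∑ n ∈ Finset.Ico 1 N, (F n - 1) * 2 ≤
      ∑ n ∈ Finset.Ico 1 N, ((M n : ℝ) - 1) * 2 := by
    refine Finset.sum_le_sum fun n hn => ?_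
    have h1 : F n ≤ (M n : ℝ) := Nat.le_ceil _
    linarith
  have hexp : ∑ n ∈ Finset.Ico 1 N, (F n - 1) * 2
      = 2 * (∑ n ∈ Finset.Ico 1 N, F n) - 2 * ((N : ℝ) - 1) := by
    have h1 : ∀ n : ℕ, (F n - 1) * 2 = 2 * F n - 2 := fun n => by ring
    simp only [h1]
    rw [Finset.sum_sub_distrib, ← Finset.mul_sum, Finset.sum_const, Nat.card_Ico,
      nsmul_eq_mul, Nat.cast_sub (by omega)]
    ring
  -- sum vs integral comparison
  have hanti : AntitoneOn F (Set.Icc ((1:ℕ):ℝ) ((N:ℕ):ℝ)) := by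
    intro x hx y hy hxy
    have hx1 : (1:ℝ) ≤ x := by simpa using hx.1
    refine Real.sqrt_le_sqrt ?_
    nlinarith
  have hint1 : ∫ x in ((1:ℕ):ℝ)..((N:ℕ):ℝ), F x ≤ ∑ n ∈ Finset.Ico 1 N, F n :=
    AntitoneOn.integral_le_sum_Ico (by omega) hanti
  have hint2 : ∫ x in (1:ℝ)..(s/2), F x ≤ ∫ x in (1:ℝ)..((N:ℝ)), F x :=
    intervalIntegral.integral_mono_interval le_rfl (by linarith) hNs
      (Filter.Eventually.of_forall hFnn) (hFc.intervalIntegrable _ _)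
  have hr : (0:ℝ) < s / 2 := by linarith
  -- the exact quarter-ellipse integral
  have hI0r : ∫ x in (0:ℝ)..(s/2), F x = π * lam / 8 := by
    have hFx : ∀ x : ℝ, F x = s * Real.sqrt (1 - (x / (s/2)) ^ 2) := by
      intro x
      have h1 : lam - 4 * x ^ 2 = lam * (1 - (x / (s/2)) ^ 2) := by
        have hsne : s ≠ 0 := by linarith
        field_simp
        nlinarith [hsq]
      show Real.sqrt (lam - 4 * x ^ 2) = s * Real.sqrt (1 - (x / (s/2)) ^ 2)
      rw [h1, Real.sqrt_mul hlam]
    calc ∫ x in (0:ℝ)..(s/2), F x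
        = ∫ x in (0:ℝ)..(s/2), s * Real.sqrt (1 - (x/(s/2))^2) := by
          simp only [hFx]
    _ = s * ∫ x in (0:ℝ)..(s/2), Real.sqrt (1 - (x/(s/2))^2) := by
          rw [intervalIntegral.integral_const_mul]
    _ = s * ((s/2) • ∫ t in (0:ℝ)/(s/2)..(s/2)/(s/2), Real.sqrt (1 - t^2)) := by
          rw [intervalIntegral.integral_comp_div (fun t => Real.sqrt (1 - t^2)) (ne_of_gt hr)]
    _ = π * lam / 8 := by
          rw [zero_div, div_self (ne_of_gt hr), aux_I01, smul_eq_mul]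
          linear_combination (π / 8) * hsq
  have hI01 : ∫ x in (0:ℝ)..1, F x ≤ s := by
    calc ∫ x in (0:ℝ)..1, F x ≤ ∫ _x in (0:ℝ)..1, s := by
          refine intervalIntegral.integral_mono_on (by norm_num)
            (hFc.intervalIntegrable _ _) intervalIntegrable_const fun x hx => ?_
          have : lam - 4 * x ^ 2 ≤ lam := by nlinarith [hx.1]
          calc F x ≤ Real.sqrt lam := Real.sqrt_le_sqrt this
          _ = s := rfl
    _ = s := by simp
  have haddF : (∫ x in (0:ℝ)..1, F x) + (∫ x in (1:ℝ)..(s/2), F x)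
      = ∫ x in (0:ℝ)..(s/2), F x :=
    intervalIntegral.integral_add_adjacent_intervals (hFc.intervalIntegrable _ _)
      (hFc.intervalIntegrable _ _)
  have hkey : π * lam / 8 - s ≤ ∑ n ∈ Finset.Ico 1 N, F n := by
    have h1 : ∫ x in ((1:ℕ):ℝ)..((N:ℕ):ℝ), F x = ∫ x in (1:ℝ)..((N:ℝ)), F x := by norm_num
    rw [h1] at hint1
    linarith
  -- final combination
  have hfin : s / 2 + 2 * (π * lam / 8 - s) ≤ (kleinW2 lam : ℝ) := by
    have := Finset.sum_le_sum fun n (_ : n ∈ Finset.Ico 1 N) => le_refl (F n)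
    linarith
  rw [ge_iff_le]
  linarith
end

section
/- For any β ∈ R, the open set {(x,t) ∈ (0,π) × (R/2πZ) : sin(x)·cos(t−β) ≠ 0} has exactly two connected components. -/
open Real

/-- The identification relation on `ℝ²` defining the cylinder whose circle has
circumference `c`: `(x,y) ~ (x, y + ck)`, `k ∈ ℤ`. -/
def cylRel (c : ℝ) (p q : ℝ × ℝ) : Prop :=
  q.1 = p.1 ∧ ∃ k : ℤ, q.2 = p.2 + c * k

/-- The flat cylinder `(0,π) × (ℝ/2πℤ)` lives inside the quotient of `ℝ²` by a
vertical translation of length `2π`. -/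
def CylOne : Type := Quot (cylRel (2 * π))

instance : TopologicalSpace CylOne :=
  (instTopologicalSpaceQuot : TopologicalSpace (Quot (cylRel (2 * π))))

/-!
Since `sin x > 0` on `(0, π)`, the set is the image of `(0, π) × {t | cos (t - β) ≠ 0}`.
Reducing `t` modulo `2π` into `[β - π/2, β + 3π/2)` shows that this image is the union of
the images of the open rectangles where `cos (t - β) > 0` and where `cos (t - β) < 0`.
These two images are open, preconnected and nonempty, and they are disjoint because
`cos (t - β)` is well defined on the cylinder; so they are the two components.
-/

open Set

theorem connectedComponent_eq_of_isOpen_compl {X : Type*} [TopologicalSpace X] {U : Set X}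
    (hU : IsOpen U) (hUc : IsOpen Uᶜ) (hUp : IsPreconnected U) {x : X} (hx : x ∈ U) :
    connectedComponent x = U :=
  (IsClopen.connectedComponent_subset ⟨isOpen_compl_iff.mp hUc, hU⟩ hx).antisymm
    (hUp.subset_connectedComponent hx)

theorem natCard_connectedComponents_eq_two {X : Type*} [TopologicalSpace X] {U V : Set X}
    (hU : IsOpen U) (hV : IsOpen V) (hUV : IsCompl U V)
    (hUp : IsPreconnected U) (hVp : IsPreconnected V) {x y : X} (hx : x ∈ U) (hy : y ∈ V) :
    Nat.card (ConnectedComponents X) = 2 := by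
  have hUx : connectedComponent x = U :=
    connectedComponent_eq_of_isOpen_compl hU (hUV.compl_eq ▸ hV) hUp hx
  have hVy : connectedComponent y = V :=
    connectedComponent_eq_of_isOpen_compl hV (hUV.symm.compl_eq ▸ hU) hVp hy
  refine Nat.card_eq_two_iff.mpr ⟨x, y, fun h => ?_, ?_⟩
  · rw [ConnectedComponents.coe_eq_coe, hUx, hVy] at h
    exact disjoint_left.mp hUV.disjoint hx (h ▸ hx)
  · refine eq_univ_of_forall (ConnectedComponents.surjective_coe.forall.2 fun z => ?_)
    rcases hUV.codisjoint.top_le (mem_univ z) with hz | hz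
    · exact .inl <| ConnectedComponents.coe_eq_coe.2 (connectedComponent_eq (hUx ▸ hz)).symm
    · exact .inr <| ConnectedComponents.coe_eq_coe.2 (connectedComponent_eq (hVy ▸ hz)).symm

theorem natCard_connectedComponents_union_eq_two {Y : Type*} [TopologicalSpace Y] {A B : Set Y}
    (hA : IsOpen A) (hB : IsOpen B) (hAB : Disjoint A B)
    (hAp : IsPreconnected A) (hBp : IsPreconnected B) (hAne : A.Nonempty) (hBne : B.Nonempty) :
    Nat.card (ConnectedComponents ↥(A ∪ B)) = 2 := by
  have hval : IsOpenMap (Subtype.val : ↥(A ∪ B) → Y) := (hA.union hB).isOpenMap_subtype_val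
  have hrange : range (Subtype.val : ↥(A ∪ B) → Y) = A ∪ B := Subtype.range_coe
  obtain ⟨a, ha⟩ := hAne
  obtain ⟨b, hb⟩ := hBne
  refine natCard_connectedComponents_eq_two (U := Subtype.val ⁻¹' A) (V := Subtype.val ⁻¹' B)
    (hA.preimage continuous_subtype_val) (hB.preimage continuous_subtype_val)
    ⟨hAB.preimage _, codisjoint_iff.2 <| eq_univ_of_forall fun z => z.2⟩
    (hAp.preimage_of_isOpenMap Subtype.val_injective hval (hrange.symm ▸ subset_union_left))
    (hBp.preimage_of_isOpenMap Subtype.val_injective hval (hrange.symm ▸ subset_union_right))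
    (x := ⟨a, .inl ha⟩) (y := ⟨b, .inr hb⟩) ha hb

theorem cylRel_equivalence (c : ℝ) : Equivalence (cylRel c) where
  refl _ := ⟨rfl, 0, by simp⟩
  symm := fun ⟨h1, k, h2⟩ => ⟨h1.symm, -k, by push_cast; linarith⟩
  trans := fun ⟨h1, k, h2⟩ ⟨h3, m, h4⟩ => ⟨h3.trans h1, k + m, by push_cast; linarith⟩

theorem quot_mk_cylRel_eq_iff {c : ℝ} {p q : ℝ × ℝ} :
    Quot.mk (cylRel c) p = Quot.mk (cylRel c) q ↔ cylRel c p q :=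
  ⟨fun h => (cylRel_equivalence c).eqvGen_iff.mp (Quot.eqvGen_exact h), Quot.sound⟩

theorem isOpenMap_quot_mk_cylRel (c : ℝ) : IsOpenMap (Quot.mk (cylRel c)) := by
  intro U hU
  have hsat : Quot.mk (cylRel c) ⁻¹' (Quot.mk (cylRel c) '' U) =
      ⋃ k : ℤ, (fun p : ℝ × ℝ => (p.1, p.2 + c * k)) ⁻¹' U := by
    ext p
    simp only [mem_preimage, mem_image, mem_iUnion, quot_mk_cylRel_eq_iff]
    constructor
    · rintro ⟨q, hq, h1, k, h2⟩
      refine ⟨-k, ?_⟩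
      convert hq using 1
      ext <;> simp [h1, h2]
    · rintro ⟨k, hk⟩
      exact ⟨_, hk, rfl, -k, by push_cast; ring⟩
  rw [isOpen_coinduced, hsat]
  exact isOpen_iUnion fun k => hU.preimage (by fun_prop)

theorem quot_mk_cylRel_toIcoMod {c : ℝ} (hc : 0 < c) (a : ℝ) (p : ℝ × ℝ) :
    Quot.mk (cylRel c) (p.1, toIcoMod hc a p.2) = Quot.mk (cylRel c) p :=
  Quot.sound ⟨rfl, toIcoDiv hc a p.2, by
    rw [mul_comm, ← zsmul_eq_mul, toIcoMod_add_toIcoDiv_zsmul]⟩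

theorem Function.Periodic.eq_of_quot_mk_cylRel_eq {f : ℝ → ℝ} {c : ℝ}
    (hf : Function.Periodic f c) {p q : ℝ × ℝ} (h : Quot.mk (cylRel c) p = Quot.mk (cylRel c) q) :
    f p.2 = f q.2 := by
  obtain ⟨-, k, hk⟩ := quot_mk_cylRel_eq_iff.mp h
  rw [hk, mul_comm, hf.int_mul k]

theorem cos_sub_pos_of_mem_Ioo {β t : ℝ} (ht : t ∈ Ioo (β - π / 2) (β + π / 2)) :
    0 < cos (t - β) :=
  cos_pos_of_mem_Ioo ⟨by linarith [ht.1], by linarith [ht.2]⟩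

theorem cos_sub_neg_of_mem_Ioo {β t : ℝ} (ht : t ∈ Ioo (β + π / 2) (β + 3 * π / 2)) :
    cos (t - β) < 0 :=
  cos_neg_of_pi_div_two_lt_of_lt (by linarith [ht.1]) (by linarith [ht.2])

theorem image_sin_mul_cos_ne_zero_eq_union (β : ℝ) :
    Quot.mk (cylRel (2 * π)) ''
        {p : ℝ × ℝ | p.1 ∈ Ioo 0 π ∧ sin p.1 * cos (p.2 - β) ≠ 0} =
      Quot.mk (cylRel (2 * π)) '' (Ioo 0 π ×ˢ Ioo (β - π / 2) (β + π / 2)) ∪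
        Quot.mk (cylRel (2 * π)) '' (Ioo 0 π ×ˢ Ioo (β + π / 2) (β + 3 * π / 2)) := by
  refine Subset.antisymm ?_ ?_
  · rintro _ ⟨p, ⟨hx, hne⟩, rfl⟩
    rw [← quot_mk_cylRel_toIcoMod two_pi_pos (β - π / 2)]
    set t := toIcoMod two_pi_pos (β - π / 2) p.2
    have ht : t ∈ Ico (β - π / 2) (β - π / 2 + 2 * π) := toIcoMod_mem_Ico _ _ _
    have hcos : cos (t - β) ≠ 0 := by
      rw [(cos_periodic.sub_const β).eq_of_quot_mk_cylRel_eq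
        (quot_mk_cylRel_toIcoMod two_pi_pos (β - π / 2) p)]
      exact right_ne_zero_of_mul hne
    have hlow : t ≠ β - π / 2 := fun h => hcos (by simp [h])
    have hmid : t ≠ β + π / 2 := fun h => hcos (by simp [h])
    rcases lt_or_gt_of_ne hmid with h | h
    · exact .inl ⟨(p.1, t), ⟨hx, lt_of_le_of_ne ht.1 hlow.symm, h⟩, rfl⟩
    · exact .inr ⟨(p.1, t), ⟨hx, h, by linarith [ht.2]⟩, rfl⟩
  · rw [← image_union]
    refine image_mono (union_subset ?_ ?_) <;> rintro ⟨x, t⟩ ⟨hx, ht⟩ <;>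
      refine ⟨hx, mul_ne_zero (sin_pos_of_pos_of_lt_pi hx.1 hx.2).ne' ?_⟩
    exacts [(cos_sub_pos_of_mem_Ioo ht).ne', (cos_sub_neg_of_mem_Ioo ht).ne]

theorem disjoint_image_cos_sub_pos_neg (β : ℝ) :
    Disjoint (Quot.mk (cylRel (2 * π)) '' (Ioo 0 π ×ˢ Ioo (β - π / 2) (β + π / 2)))
      (Quot.mk (cylRel (2 * π)) '' (Ioo 0 π ×ˢ Ioo (β + π / 2) (β + 3 * π / 2))) := by
  refine disjoint_left.2 ?_
  rintro _ ⟨p, hp, rfl⟩ ⟨q, hq, hqp⟩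
  have := (cos_periodic.sub_const β).eq_of_quot_mk_cylRel_eq hqp
  linarith [cos_sub_pos_of_mem_Ioo hp.2, cos_sub_neg_of_mem_Ioo hq.2]

/-- for any `β ∈ ℝ`, the open set
`{(x,t) ∈ (0,π) × (ℝ/2πℤ) : sin(x)·cos(t−β) ≠ 0}` has exactly two connected
components. -/
theorem two_nodal_domains_C_one (β : ℝ) :
    Nat.card (ConnectedComponents
        ↥(Quot.mk (cylRel (2 * π)) ''
          {p : ℝ × ℝ | p.1 ∈ Set.Ioo 0 π ∧ Real.sin p.1 * Real.cos (p.2 - β) ≠ 0})) = 2 := by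
  have isOpen_rect (a b : ℝ) : IsOpen (Quot.mk (cylRel (2 * π)) '' (Ioo 0 π ×ˢ Ioo a b)) :=
    isOpenMap_quot_mk_cylRel _ _ (isOpen_Ioo.prod isOpen_Ioo)
  have isPreconnected_rect (a b : ℝ) :
      IsPreconnected (Quot.mk (cylRel (2 * π)) '' (Ioo 0 π ×ˢ Ioo a b)) :=
    (isPreconnected_Ioo.prod isPreconnected_Ioo).image _ continuous_quot_mk.continuousOn
  have nonempty_rect {a b : ℝ} (hab : a < b) :
      (Quot.mk (cylRel (2 * π)) '' (Ioo 0 π ×ˢ Ioo a b)).Nonempty :=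
    ((nonempty_Ioo.2 pi_pos).prod (nonempty_Ioo.2 hab)).image _
  rw [image_sin_mul_cos_ne_zero_eq_union]
  exact natCard_connectedComponents_union_eq_two (isOpen_rect _ _) (isOpen_rect _ _)
    (disjoint_image_cos_sub_pos_neg β)
    (isPreconnected_rect _ _) (isPreconnected_rect _ _)
    (nonempty_rect (by linarith [pi_pos])) (nonempty_rect (by linarith [pi_pos]))
end
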